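/- For every real number p with 1/2 < p ≤ 1 and every natural number n ≥ 1, the half-binomial probability is nondecreasing in n: B(p, n) ≥ B(p, n-1). -/

import Mathlib

/-!
Let `T(n, k)` be the probability of more than `k` successes in `n` trials. Pascal's rule gives
`T(n + 1, k) = T(n, k) + p · P(X_n = k)`. Passing from `2m` to `2m + 1` trials therefore trades the
half-weighted middle term `½ · P(X_{2m} = m)` for `p · P(X_{2m} = m)`, a gain since `p ≥ ½`.
Passing from `2m + 1` to `2m + 2` changes nothing: as `C(2m+2, m+1) = 2 C(2m+1, m+1)`, the new
half-weighted middle term is `(1 - p) · P(X_{2m+1} = m+1)`, which together with the share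
`p · P(X_{2m+1} = m+1)` from Pascal's rule exactly replaces the term `P(X_{2m+1} = m+1)` lost by
raising the threshold from `m` to `m + 1`.
-/

open Finset

/-- Half-binomial probability: the probability that a Binomial(n, p) variable
exceeds n/2, with outcomes exactly equal to n/2 counted with weight 1/2. -/
noncomputable def halfBin (p : ℝ) (n : ℕ) : ℝ :=
  (∑ i ∈ Finset.Icc (n / 2 + 1) n, (n.choose i : ℝ) * p ^ i * (1 - p) ^ (n - i)) +
    (if Even n then (1 / 2 : ℝ) * (n.choose (n / 2) : ℝ) * p ^ (n / 2) * (1 - p) ^ (n / 2)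
     else 0)

noncomputable def binomTerm (p : ℝ) (n i : ℕ) : ℝ :=
  n.choose i * p ^ i * (1 - p) ^ (n - i)

noncomputable def binomTail (p : ℝ) (n k : ℕ) : ℝ :=
  ∑ i ∈ Ioc k n, binomTerm p n i

lemma binomTerm_of_lt {p : ℝ} {n i : ℕ} (h : n < i) : binomTerm p n i = 0 := by
  simp [binomTerm, Nat.choose_eq_zero_of_lt h]

lemma binomTerm_nonneg {p : ℝ} (hp0 : 0 ≤ p) (hp1 : p ≤ 1) (n i : ℕ) :
    0 ≤ binomTerm p n i := by
  unfold binomTerm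
  have : 0 ≤ 1 - p := by linarith
  positivity

lemma binomTerm_succ_succ (p : ℝ) (n i : ℕ) :
    binomTerm p (n + 1) (i + 1) = p * binomTerm p n i + (1 - p) * binomTerm p n (i + 1) := by
  rcases lt_or_ge n (i + 1) with h | h
  · rw [binomTerm_of_lt h, binomTerm, binomTerm, Nat.choose_succ_succ',
      Nat.choose_eq_zero_of_lt h, add_zero, Nat.add_sub_add_right]
    ring
  · rw [binomTerm, binomTerm, binomTerm, Nat.choose_succ_succ', Nat.add_sub_add_right,
      show n - i = n - (i + 1) + 1 by omega]
    push_cast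
    ring

lemma sum_Ioc_succ_eq_sum_Icc {M : Type*} [AddCommMonoid M] (f : ℕ → M) (k n : ℕ) :
    ∑ i ∈ Ioc k (n + 1), f i = ∑ j ∈ Icc k n, f (j + 1) := by
  rw [← Icc_add_one_left_eq_Ioc, ← map_add_right_Icc, sum_map]
  rfl

lemma binomTail_succ (p : ℝ) {n k : ℕ} (hk : k ≤ n) :
    binomTail p (n + 1) k = binomTail p n k + p * binomTerm p n k := by
  have hshift : ∑ j ∈ Icc k n, binomTerm p n (j + 1) = binomTail p n k := by
    rw [← sum_Ioc_succ_eq_sum_Icc, sum_Ioc_succ_top (by omega),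
      binomTerm_of_lt (Nat.lt_succ_self n), add_zero, binomTail]
  have hpeel : ∑ j ∈ Icc k n, binomTerm p n j = binomTerm p n k + binomTail p n k := by
    rw [Icc_eq_cons_Ioc hk, sum_cons, binomTail]
  rw [binomTail, sum_Ioc_succ_eq_sum_Icc]
  simp only [binomTerm_succ_succ, sum_add_distrib, ← mul_sum, hshift, hpeel]
  ring

lemma binomTail_eq_binomTerm_add {p : ℝ} {n k : ℕ} (hk : k < n) :
    binomTail p n k = binomTerm p n (k + 1) + binomTail p n (k + 1) := by
  rw [binomTail, binomTail, ← insert_Ioc_add_one_left_eq_Ioc hk, sum_insert left_notMem_Ioc]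

lemma halfBin_two_mul (p : ℝ) (m : ℕ) :
    halfBin p (2 * m) = binomTail p (2 * m) m + 1 / 2 * binomTerm p (2 * m) m := by
  rw [halfBin, binomTail, binomTerm, if_pos (even_two_mul m), Nat.mul_div_cancel_left m two_pos,
    Icc_add_one_left_eq_Ioc, show 2 * m - m = m by omega]
  simp only [binomTerm]
  ring

lemma halfBin_two_mul_add_one (p : ℝ) (m : ℕ) :
    halfBin p (2 * m + 1) = binomTail p (2 * m + 1) m := by
  rw [halfBin, binomTail, if_neg (Nat.not_even_iff_odd.2 (odd_two_mul_add_one m)),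
    show (2 * m + 1) / 2 = m by omega, Icc_add_one_left_eq_Ioc, add_zero]
  rfl

lemma halfBin_two_mul_le_succ {p : ℝ} (hp : 1 / 2 ≤ p) (hp1 : p ≤ 1) (m : ℕ) :
    halfBin p (2 * m) ≤ halfBin p (2 * m + 1) := by
  rw [halfBin_two_mul, halfBin_two_mul_add_one, binomTail_succ p (show m ≤ 2 * m by omega)]
  have := binomTerm_nonneg (by linarith) hp1 (2 * m) m
  nlinarith

lemma binomTerm_middle_succ (p : ℝ) (m : ℕ) :
    1 / 2 * binomTerm p (2 * m + 1 + 1) (m + 1) = (1 - p) * binomTerm p (2 * m + 1) (m + 1) := by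
  have hchoose : (2 * m + 1 + 1).choose (m + 1) = 2 * (2 * m + 1).choose (m + 1) := by
    rw [Nat.choose_succ_succ', ← Nat.choose_symm_half]
    omega
  rw [binomTerm, binomTerm, hchoose,
    show 2 * m + 1 + 1 - (m + 1) = 2 * m + 1 - (m + 1) + 1 by omega]
  push_cast
  ring

lemma halfBin_two_mul_add_one_eq_succ (p : ℝ) (m : ℕ) :
    halfBin p (2 * m + 1) = halfBin p (2 * m + 2) := by
  have hsucc := halfBin_two_mul p (m + 1)
  rw [show 2 * (m + 1) = 2 * m + 1 + 1 by ring] at hsucc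
  rw [hsucc, halfBin_two_mul_add_one, binomTerm_middle_succ,
    binomTail_succ p (show m + 1 ≤ 2 * m + 1 by omega),
    binomTail_eq_binomTerm_add (show m < 2 * m + 1 by omega)]
  ring

theorem halfBin_mono (p : ℝ) (hp : 1 / 2 < p) (hp1 : p ≤ 1) (n : ℕ) (hn : 1 ≤ n) :
    halfBin p (n - 1) ≤ halfBin p n := by
  obtain ⟨m, rfl | rfl⟩ : ∃ m, n = 2 * m + 1 ∨ n = 2 * m + 2 := ⟨(n - 1) / 2, by omega⟩
  · exact halfBin_two_mul_le_succ hp.le hp1 m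
  · exact (halfBin_two_mul_add_one_eq_succ p m).le
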